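/- Consider the reduction dataset built from a 2-CNF formula F over n variables with m clauses, where m < n², and let 0 ≤ r ≤ m. The following are equivalent: (i) there exists an assignment τ such that at least r clauses of F each have exactly one true literal under τ; (ii) there exist w ∈ ℝ^n with all coordinates nonzero and a bonus vector on the dataset with at most m − r nonzero values such that the adjusted scores are non-increasing along the ranking π of the reduction. -/

import Mathlib

/-- The position (0-indexed) of the clause point `p_i` in the ranking `π` of the
reduction: the dataset consists of `(m+1)·n²` zero points and `m` clause points,
listed as `n²` zeros, `p_1`, `n²` zeros, `p_2`, …, `p_m`, `n²` zeros. -/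
def clauseIdx (n m : ℕ) (i : Fin m) : Fin ((m + 1) * n ^ 2 + m) :=
  ⟨((i : ℕ) + 1) * n ^ 2 + (i : ℕ), by
    have h1 : ((i : ℕ) + 1) * n ^ 2 ≤ (m + 1) * n ^ 2 :=
      Nat.mul_le_mul_right _ (Nat.succ_le_succ i.isLt.le)
    exact add_lt_add_of_le_of_lt h1 i.isLt⟩

/-- The literal with sign `s ∈ {1, −1}` on a variable with truth value `b` is true:
a positive literal (`s = 1`) is true when `b = true`, a negated literal (`s = −1`)
is true when `b = false`. -/
def litTrue (s : ℝ) (b : Bool) : Prop :=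
  (s = 1 ∧ b = true) ∨ (s = -1 ∧ b = false)

open Finset

/-!
Take `w_j = ±1` according to `τ`. A clause point then scores `0` exactly when the clause has one
true and one false literal, so the bonus `−w·p` realizes `π` with all adjusted scores `0` and is
nonzero only on the remaining clauses.

Conversely, fewer than `n²` bonuses are nonzero (`m − r ≤ m < n²`), so each of the `m + 1` runs
of `n²` zero points contains a point of adjusted score `0`. A clause point `p_i` without bonus is
sandwiched between two such points, hence `w·p_i = 0`; as both terms `±w_j` are nonzero, they have
opposite signs, and reading `τ` off the signs of `w` makes exactly one literal of `C_i` true.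
-/

lemma sum_mul_ite_add_ite {ι R : Type*} [Fintype ι] [DecidableEq ι] [Semiring R]
    (w : ι → R) (a b : ι) (s t : R) :
    ∑ j, w j * ((if j = a then s else 0) + (if j = b then t else 0)) = w a * s + w b * t := by
  simp [mul_add, sum_add_distrib, mul_ite, sum_ite_eq']

lemma exists_val_mem_Ico_eq_zero {M : Type*} [Zero M] [DecidableEq M] {N : ℕ} (V : Fin N → M)
    {s k : ℕ} (hV : #{q | V q ≠ 0} < k) (hsk : s + k ≤ N) :
    ∃ q : Fin N, (q : ℕ) ∈ Ico s (s + k) ∧ V q = 0 := by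
  obtain ⟨x, hx, hxV⟩ := exists_mem_notMem_of_card_lt_card
    (s := ({q | V q ≠ 0} : Finset (Fin N)).image Fin.val) (t := Ico s (s + k))
    (by simpa using card_image_le.trans_lt hV)
  have hxN : x < N := by rw [mem_Ico] at hx; omega
  refine ⟨⟨x, hxN⟩, hx, ?_⟩
  by_contra hne
  exact hxV (mem_image.2 ⟨⟨x, hxN⟩, by simpa using hne, rfl⟩)

lemma card_sub_card_support_le {α β M : Type*} [Fintype α] [Fintype β] [Zero M] [DecidableEq M]
    {f : α → β} (hf : Function.Injective f) (V : β → M) :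
    Fintype.card α - #{b | V b ≠ 0} ≤ #{a | V (f a) = 0} := by
  have hsupp : #{a | ¬V (f a) = 0} ≤ #{b | V b ≠ 0} :=
    card_le_card_of_injOn f (fun a ha => by simpa using ha) (fun a _ b _ h => hf h)
  have hsplit := card_filter_add_card_filter_not (s := univ) (fun a => V (f a) = 0)
  rw [card_univ] at hsplit
  omega

def boolSign (b : Bool) : ℝ := if b then 1 else -1

lemma boolSign_ne_zero (b : Bool) : boolSign b ≠ 0 := by
  cases b <;> norm_num [boolSign]

lemma boolSign_mul_add_boolSign_mul_eq_zero {s t : ℝ} {b c : Bool}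
    (hs : s = 1 ∨ s = -1) (ht : t = 1 ∨ t = -1) (h : Xor (litTrue s b) (litTrue t c)) :
    boolSign b * s + boolSign c * t = 0 := by
  revert h
  rcases hs with rfl | rfl <;> rcases ht with rfl | rfl <;> cases b <;> cases c <;>
    norm_num [Xor, litTrue, boolSign]

lemma litTrue_decide_pos_iff {s x : ℝ} (hs : s = 1 ∨ s = -1) (hx : x ≠ 0) :
    litTrue s (decide (0 < x)) ↔ 0 < x * s := by
  rcases hs with rfl | rfl <;> rcases hx.lt_or_gt with h | h <;>
    norm_num [litTrue, h, h.not_gt]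

lemma xor_litTrue_of_mul_add_mul_eq_zero {s t x y : ℝ} (hs : s = 1 ∨ s = -1)
    (ht : t = 1 ∨ t = -1) (hx : x ≠ 0) (hy : y ≠ 0) (h : x * s + y * t = 0) :
    Xor (litTrue s (decide (0 < x))) (litTrue t (decide (0 < y))) := by
  rw [litTrue_decide_pos_iff hs hx, litTrue_decide_pos_iff ht hy]
  have hxs : x * s ≠ 0 := mul_ne_zero hx (by rcases hs with rfl | rfl <;> norm_num)
  rcases hxs.lt_or_gt with hneg | hpos
  · exact Or.inr ⟨by linarith, hneg.not_gt⟩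
  · exact Or.inl ⟨hpos, by linarith⟩

section Layout

variable {n m : ℕ}

lemma clauseIdx_val (i : Fin m) : (clauseIdx n m i : ℕ) = i * (n ^ 2 + 1) + n ^ 2 := by
  simp only [clauseIdx]
  ring

lemma clauseIdx_strictMono : StrictMono (clauseIdx n m) := fun i j hij => by
  rw [Fin.lt_def, clauseIdx_val, clauseIdx_val]
  have := Nat.mul_lt_mul_of_pos_right hij (show 0 < n ^ 2 + 1 by positivity)
  omega

lemma exists_zero_point_with_zero_bonus {V : Fin ((m + 1) * n ^ 2 + m) → ℝ}
    (hV : #{q | V q ≠ 0} < n ^ 2) {b : ℕ} (hb : b ≤ m) :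
    ∃ q : Fin ((m + 1) * n ^ 2 + m), b * (n ^ 2 + 1) ≤ (q : ℕ) ∧
      (q : ℕ) < b * (n ^ 2 + 1) + n ^ 2 ∧ V q = 0 ∧ ∀ i, q ≠ clauseIdx n m i := by
  have hsk : b * (n ^ 2 + 1) + n ^ 2 ≤ (m + 1) * n ^ 2 + m := by
    have := Nat.mul_le_mul_right (n ^ 2 + 1) hb
    linarith
  obtain ⟨q, hq, hVq⟩ := exists_val_mem_Ico_eq_zero V hV hsk
  rw [mem_Ico] at hq
  refine ⟨q, hq.1, hq.2, hVq, fun i hqi => ?_⟩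
  -- clause points sit at residue `n²` modulo `n² + 1`, zero points at residues below `n²`
  obtain ⟨t, hqt⟩ : ∃ t, (q : ℕ) = b * (n ^ 2 + 1) + t := ⟨q - b * (n ^ 2 + 1), by omega⟩
  have hq_mod : (q : ℕ) % (n ^ 2 + 1) = t := by
    rw [hqt]
    exact Nat.mul_add_mod_of_lt (by omega)
  have hclause_mod : (clauseIdx n m i : ℕ) % (n ^ 2 + 1) = n ^ 2 := by
    rw [clauseIdx_val]
    exact Nat.mul_add_mod_of_lt (by omega)
  rw [hqi, hclause_mod] at hq_mod
  omega

lemma card_support_neg_sum_mul_le {D : Fin ((m + 1) * n ^ 2 + m) → Fin n → ℝ}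
    (hD : ∀ q, (∀ i, q ≠ clauseIdx n m i) → D q = 0) (w : Fin n → ℝ) (R : Finset (Fin m))
    (hR : ∀ i ∈ R, ∑ j, w j * D (clauseIdx n m i) j = 0) :
    #{q | -∑ j, w j * D q j ≠ 0} ≤ m - #R := by
  have hsub : ({q | -∑ j, w j * D q j ≠ 0} : Finset _) ⊆ (univ \ R).image (clauseIdx n m) := by
    intro q hq
    simp only [mem_filter, mem_univ, true_and, ne_eq, neg_eq_zero] at hq
    by_cases hclause : ∃ i, q = clauseIdx n m i
    · obtain ⟨i, rfl⟩ := hclause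
      exact mem_image.2 ⟨i, mem_sdiff.2 ⟨mem_univ i, fun hi => hq (hR i hi)⟩, rfl⟩
    · simp [hD q (not_exists.mp hclause)] at hq
  calc #{q | -∑ j, w j * D q j ≠ 0}
      ≤ #(univ \ R) := (card_le_card hsub).trans card_image_le
    _ = m - #R := by rw [card_univ_sdiff, Fintype.card_fin]

lemma sum_mul_clauseIdx_eq_zero_of_antitone {D : Fin ((m + 1) * n ^ 2 + m) → Fin n → ℝ}
    (hD : ∀ q, (∀ i, q ≠ clauseIdx n m i) → D q = 0) {w : Fin n → ℝ}
    {V : Fin ((m + 1) * n ^ 2 + m) → ℝ} (hV : #{q | V q ≠ 0} < n ^ 2)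
    (hanti : Antitone fun q => (∑ j, w j * D q j) + V q) {i : Fin m}
    (hVi : V (clauseIdx n m i) = 0) : ∑ j, w j * D (clauseIdx n m i) j = 0 := by
  have score_zero : ∀ q, V q = 0 → (∀ i, q ≠ clauseIdx n m i) →
      (∑ j, w j * D q j) + V q = 0 := fun q hVq hq => by simp [hD q hq, hVq]
  obtain ⟨before, -, hbefore, hVb, hDb⟩ := exists_zero_point_with_zero_bonus hV i.is_lt.le
  obtain ⟨after, hafter, -, hVa, hDa⟩ :=
    exists_zero_point_with_zero_bonus hV (b := i + 1) i.is_lt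
  have hnext : ((i : ℕ) + 1) * (n ^ 2 + 1) = i * (n ^ 2 + 1) + (n ^ 2 + 1) := by ring
  have h₁ := hanti (show before ≤ clauseIdx n m i by rw [Fin.le_def, clauseIdx_val]; omega)
  have h₂ := hanti (show clauseIdx n m i ≤ after by rw [Fin.le_def, clauseIdx_val]; omega)
  simp only [score_zero _ hVb hDb, score_zero _ hVa hDa, hVi, add_zero] at h₁ h₂
  exact le_antisymm h₁ h₂

end Layout

theorem stmt_5_general (n m r : ℕ) (hm : m < n ^ 2) (hr : r ≤ m)
    (va vb : Fin m → Fin n) (sa sb : Fin m → ℝ)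
    (hsa : ∀ i, sa i = 1 ∨ sa i = -1) (hsb : ∀ i, sb i = 1 ∨ sb i = -1)
    (p : Fin m → Fin n → ℝ)
    (hp : ∀ i j, p i j =
      (if j = va i then sa i else 0) + (if j = vb i then sb i else 0))
    (D : Fin ((m + 1) * n ^ 2 + m) → Fin n → ℝ)
    (hD1 : ∀ i, D (clauseIdx n m i) = p i)
    (hD2 : ∀ idx, (∀ i, idx ≠ clauseIdx n m i) → D idx = 0) :
    (∃ τ : Fin n → Bool, ∃ R : Finset (Fin m), r ≤ R.card ∧
        ∀ i ∈ R, Xor' (litTrue (sa i) (τ (va i))) (litTrue (sb i) (τ (vb i)))) ↔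
      (∃ w : Fin n → ℝ, (∀ j, w j ≠ 0) ∧
        ∃ V : Fin ((m + 1) * n ^ 2 + m) → ℝ,
          (Finset.univ.filter fun idx => V idx ≠ 0).card ≤ m - r ∧
          ∀ idx idx' : Fin ((m + 1) * n ^ 2 + m), idx ≤ idx' →
            (∑ j, w j * D idx' j) + V idx' ≤ (∑ j, w j * D idx j) + V idx) := by
  have clause_score : ∀ (w : Fin n → ℝ) i,
      ∑ j, w j * D (clauseIdx n m i) j = w (va i) * sa i + w (vb i) * sb i := fun w i => by
    simp only [hD1, hp]
    exact sum_mul_ite_add_ite w (va i) (vb i) (sa i) (sb i)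
  constructor
  · rintro ⟨τ, R, hrR, hR⟩
    refine ⟨fun j => boolSign (τ j), fun j => boolSign_ne_zero _,
      fun q => -∑ j, boolSign (τ j) * D q j, ?_, fun q q' _ => by simp⟩
    refine (card_support_neg_sum_mul_le hD2 _ R fun i hi => ?_).trans (by omega)
    rw [clause_score]
    exact boolSign_mul_add_boolSign_mul_eq_zero (hsa i) (hsb i) (hR i hi)
  · rintro ⟨w, hw, V, hV, hanti⟩
    refine ⟨fun j => decide (0 < w j), ({i | V (clauseIdx n m i) = 0} : Finset (Fin m)), ?_,
      fun i hi => ?_⟩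
    · have := card_sub_card_support_le clauseIdx_strictMono.injective V
      rw [Fintype.card_fin] at this
      omega
    · apply xor_litTrue_of_mul_add_mul_eq_zero (hsa i) (hsb i) (hw _) (hw _)
      rw [← clause_score]
      exact sum_mul_clauseIdx_eq_zero_of_antitone hD2 (hV.trans_lt ((m.sub_le r).trans_lt hm))
        hanti (mem_filter.1 hi).2

/-- correctness of the reduction: for the reduction dataset of a 2-CNF
formula with `m < n²` clauses and `0 ≤ r ≤ m`, the following are equivalent:
(i) some assignment `τ` makes exactly one literal true in each of at least `r` clauses;
(ii) there exist `w ∈ ℝ^n` with all coordinates nonzero and a bonus vector on the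
dataset with at most `m − r` nonzero values such that the adjusted scores are
non-increasing along the ranking `π` of the reduction. -/
theorem stmt_5 (n m r : ℕ) (hm : m < n ^ 2) (hr : r ≤ m)
    (va vb : Fin m → Fin n) (sa sb : Fin m → ℝ)
    (hvab : ∀ i, va i ≠ vb i)
    (hsa : ∀ i, sa i = 1 ∨ sa i = -1) (hsb : ∀ i, sb i = 1 ∨ sb i = -1)
    (p : Fin m → Fin n → ℝ)
    (hp : ∀ i j, p i j =
      (if j = va i then sa i else 0) + (if j = vb i then sb i else 0))
    (D : Fin ((m + 1) * n ^ 2 + m) → Fin n → ℝ)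
    (hD1 : ∀ i, D (clauseIdx n m i) = p i)
    (hD2 : ∀ idx, (∀ i, idx ≠ clauseIdx n m i) → D idx = 0) :
    (∃ τ : Fin n → Bool, ∃ R : Finset (Fin m), r ≤ R.card ∧
        ∀ i ∈ R, Xor' (litTrue (sa i) (τ (va i))) (litTrue (sb i) (τ (vb i)))) ↔
      (∃ w : Fin n → ℝ, (∀ j, w j ≠ 0) ∧
        ∃ V : Fin ((m + 1) * n ^ 2 + m) → ℝ,
          (Finset.univ.filter fun idx => V idx ≠ 0).card ≤ m - r ∧
          ∀ idx idx' : Fin ((m + 1) * n ^ 2 + m), idx ≤ idx' →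
            (∑ j, w j * D idx' j) + V idx' ≤ (∑ j, w j * D idx j) + V idx) :=
  stmt_5_general n m r hm hr va vb sa sb hsa hsb p hp D hD1 hD2
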